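/- arXiv:2501.11445 — 7 statements merged into one kernel-verified Lean document; each statement's English description precedes it below -/
import Mathlib

section
/- Let Ψ : [0,1] → [0,1] be absolutely continuous and nondecreasing with m < Ψ'(t) < M almost everywhere for constants m, M > 0. Let f : [0,∞) → [0,1] satisfy f(x+y) ≤ (m/M) f(x) + f(y) for all 0 ≤ x ≤ y. Then Ψ∘f is subadditive: Ψ(f(x+y)) ≤ Ψ(f(x)) + Ψ(f(y)) for all x, y ≥ 0. -/
open MeasureTheory

/-- Let `Ψ : [0,1] → [0,1]` be absolutely continuous and nondecreasing, with
a.e. derivative `Ψ'` satisfying `m < Ψ' t < M` for constants `m, M > 0`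
(absolute continuity is expressed by the fundamental theorem of calculus:
`Ψ b - Ψ a = ∫_a^b Ψ'`). Let `f : [0,∞) → [0,1]` satisfy
`f (x+y) ≤ (m/M) f x + f y` for all `0 ≤ x ≤ y`. Then `Ψ ∘ f` is subadditive. -/
theorem composing_into_subadditivity
    (Ψ Ψ' : ℝ → ℝ) (m M : ℝ) (hm : 0 < m) (hM : 0 < M)
    (hΨ_mono : MonotoneOn Ψ (Set.Icc 0 1))
    (hΨ_maps : ∀ t ∈ Set.Icc (0 : ℝ) 1, Ψ t ∈ Set.Icc (0 : ℝ) 1)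
    (hΨ'_int : IntegrableOn Ψ' (Set.Icc 0 1) volume)
    (hftc : ∀ a b : ℝ, 0 ≤ a → a ≤ b → b ≤ 1 →
      Ψ b - Ψ a = ∫ t in a..b, Ψ' t)
    (hΨ'_bound : ∀ᵐ t ∂(volume.restrict (Set.Icc (0:ℝ) 1)), m < Ψ' t ∧ Ψ' t < M)
    (f : ℝ → ℝ)
    (hf_maps : ∀ x, 0 ≤ x → f x ∈ Set.Icc (0 : ℝ) 1)
    (hf : ∀ x y, 0 ≤ x → x ≤ y → f (x + y) ≤ (m / M) * f x + f y) :
    ∀ x y, 0 ≤ x → 0 ≤ y → Ψ (f (x + y)) ≤ Ψ (f x) + Ψ (f y) := by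
  -- interval integrability on subintervals of [0,1]
  have hint : ∀ p q : ℝ, 0 ≤ p → p ≤ q → q ≤ 1 → IntervalIntegrable Ψ' volume p q := by
    intro p q hp hpq hq
    have hsub : Set.uIcc p q ⊆ Set.Icc 0 1 := by
      rw [Set.uIcc_of_le hpq]
      exact Set.Icc_subset_Icc hp hq
    exact (hΨ'_int.mono_set hsub).intervalIntegrable
  have hintM : ∀ p q : ℝ, IntervalIntegrable (fun _ : ℝ => M) volume p q := fun p q =>
    intervalIntegrable_const
  have hintm : ∀ p q : ℝ, IntervalIntegrable (fun _ : ℝ => m) volume p q := fun p q =>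
    intervalIntegrable_const
  have bound_ae : ∀ p q : ℝ, 0 ≤ p → q ≤ 1 →
      ∀ᵐ t ∂(volume.restrict (Set.Icc p q)), m < Ψ' t ∧ Ψ' t < M := by
    intro p q hp hq
    exact hΨ'_bound.filter_mono (ae_mono (Measure.restrict_mono
      (Set.Icc_subset_Icc hp hq) le_rfl))
  have key : ∀ x y, 0 ≤ x → x ≤ y → Ψ (f (x + y)) ≤ Ψ (f x) + Ψ (f y) := by
    intro x y hx hxy
    have hy : 0 ≤ y := hx.trans hxy
    have ha := hf_maps x hx
    have hb := hf_maps y hy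
    have hc := hf_maps (x + y) (by linarith)
    have hfc : f (x + y) ≤ (m / M) * f x + f y := hf x y hx hxy
    have hΨa : Ψ (f x) ∈ Set.Icc (0:ℝ) 1 := hΨ_maps _ ha
    have hΨb : Ψ (f y) ∈ Set.Icc (0:ℝ) 1 := hΨ_maps _ hb
    by_cases hbc : f (x + y) ≤ f y
    · have h1 : Ψ (f (x + y)) ≤ Ψ (f y) := hΨ_mono hc hb hbc
      linarith [hΨa.1]
    · push_neg at hbc
      -- upper bound: Ψ c - Ψ b = ∫_b^c Ψ' ≤ M * (c - b)
      have h1 : Ψ (f (x + y)) - Ψ (f y) = ∫ t in (f y)..(f (x + y)), Ψ' t :=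
        hftc _ _ hb.1 hbc.le hc.2
      have h2 : (∫ t in (f y)..(f (x + y)), Ψ' t) ≤ ∫ t in (f y)..(f (x + y)), M := by
        apply intervalIntegral.integral_mono_ae_restrict hbc.le
          (hint _ _ hb.1 hbc.le hc.2) (hintM _ _)
        exact (bound_ae _ _ hb.1 hc.2).mono fun t ht => ht.2.le
      have h3 : (∫ t in (f y)..(f (x + y)), (M : ℝ)) = (f (x + y) - f y) * M := by
        simp [intervalIntegral.integral_const, smul_eq_mul]
      -- lower bound: Ψ a ≥ Ψ a - Ψ 0 = ∫_0^a Ψ' ≥ m * a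
      have h4 : Ψ (f x) - Ψ 0 = ∫ t in (0:ℝ)..(f x), Ψ' t := hftc _ _ le_rfl ha.1 ha.2
      have h5 : (∫ t in (0:ℝ)..(f x), (m : ℝ)) ≤ ∫ t in (0:ℝ)..(f x), Ψ' t := by
        apply intervalIntegral.integral_mono_ae_restrict ha.1
          (hintm _ _) (hint _ _ le_rfl ha.1 ha.2)
        exact (bound_ae _ _ le_rfl ha.2).mono fun t ht => ht.1.le
      have h6 : (∫ t in (0:ℝ)..(f x), (m : ℝ)) = f x * m := by
        simp [intervalIntegral.integral_const, smul_eq_mul]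
      have hΨ0 : (0:ℝ) ≤ Ψ 0 := (hΨ_maps 0 (by constructor <;> norm_num)).1
      -- combine
      have hcb : f (x + y) - f y ≤ (m / M) * f x := by linarith
      have hMcb : (f (x + y) - f y) * M ≤ m * f x := by
        calc (f (x + y) - f y) * M ≤ (m / M) * f x * M :=
              mul_le_mul_of_nonneg_right hcb hM.le
          _ = m * f x := by field_simp
      nlinarith [ha.1]
  intro x y hx hy
  rcases le_total x y with h | h
  · exact key x y hx h
  · rw [add_comm]
    linarith [key y x hy h]
end

section
/- Let α ∈ (0, 1/2), let X, Y be i.i.d. random variables on [0,1] with density h(t) = α t^{α-1}, and let F_W be the CDF of W = |X - Y|. Then for all t ∈ (0, 1/2], F_W(t) ≥ t^{2α}. -/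
open MeasureTheory intervalIntegral

/-!
On `[0, t]` we have `H (x + t) ≥ t ^ α`, so the integrand is at least `h x (t ^ α - H x)`,
whose integral over `[0, t]` is `t ^ α * H t - H t ^ 2 / 2 = t ^ (2 * α) / 2`.
On `[t, 1]` the integrand is nonnegative because `H` is monotone.
-/

noncomputable def cdfIntegrand (α t x : ℝ) : ℝ :=
  (α * x ^ (α - 1)) * ((min (x + t) 1) ^ α - x ^ α)

section

variable {α t : ℝ}

theorem intervalIntegrable_cdfIntegrand (hα : 0 < α) (a b : ℝ) :
    IntervalIntegrable (cdfIntegrand α t) volume a b := by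
  have hdensity : IntervalIntegrable (fun x : ℝ => α * x ^ (α - 1)) volume a b :=
    (intervalIntegrable_rpow' (by linarith)).const_mul α
  refine hdensity.mul_continuousOn (ContinuousOn.sub ?_ ?_)
  · exact (((continuous_id.add continuous_const).min continuous_const).continuousOn).rpow_const
      fun _ _ => Or.inr hα.le
  · exact continuousOn_id.rpow_const fun _ _ => Or.inr hα.le

theorem rpow_le_min_add_rpow {x : ℝ} (hα : 0 ≤ α) (hx : 0 ≤ x) (hx1 : x ≤ 1) (ht : 0 ≤ t) :
    x ^ α ≤ (min (x + t) 1) ^ α :=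
  Real.rpow_le_rpow hx (le_min (by linarith) hx1) hα

theorem cdfIntegrand_nonneg {x : ℝ} (hα : 0 ≤ α) (hx : 0 ≤ x) (hx1 : x ≤ 1) (ht : 0 ≤ t) :
    0 ≤ cdfIntegrand α t x :=
  mul_nonneg (mul_nonneg hα (Real.rpow_nonneg hx _))
    (sub_nonneg.mpr (rpow_le_min_add_rpow hα hx hx1 ht))

theorem mul_sub_rpow_le_cdfIntegrand {x : ℝ} (hα : 0 ≤ α) (hx : 0 ≤ x) (hxt : x ≤ t)
    (ht1 : t ≤ 1) :
    (α * x ^ (α - 1)) * (t ^ α - x ^ α) ≤ cdfIntegrand α t x := by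
  have hH : t ^ α ≤ (min (x + t) 1) ^ α :=
    Real.rpow_le_rpow (hx.trans hxt) (le_min (by linarith) ht1) hα
  exact mul_le_mul_of_nonneg_left (by linarith) (mul_nonneg hα (Real.rpow_nonneg hx _))

theorem integral_mul_rpow_sub_rpow (hα : 0 < α) (ht : 0 ≤ t) :
    ∫ x in (0 : ℝ)..t, (α * x ^ (α - 1)) * (t ^ α - x ^ α) = t ^ (2 * α) / 2 := by
  have hsplit : Set.EqOn (fun x : ℝ => (α * x ^ (α - 1)) * (t ^ α - x ^ α))
      (fun x => (α * t ^ α) * x ^ (α - 1) - α * x ^ (2 * α - 1)) (Set.uIoo 0 t) := by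
    intro x hx
    have hx0 : 0 < x := (Set.uIoo_of_le ht ▸ hx).1
    have hpow : x ^ (2 * α - 1) = x ^ (α - 1) * x ^ α := by
      rw [← Real.rpow_add hx0]; ring_nf
    simp only [hpow]; ring
  have hint : ∀ r : ℝ, -1 < r → ∀ c : ℝ,
      IntervalIntegrable (fun x : ℝ => c * x ^ r) volume 0 t :=
    fun r hr c => (intervalIntegrable_rpow' hr).const_mul c
  have htt : t ^ α * t ^ α = t ^ (2 * α) := by
    rw [← Real.rpow_add' ht (by positivity)]; ring_nf
  rw [integral_congr_uIoo hsplit, integral_sub (hint _ (by linarith) _) (hint _ (by linarith) _),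
    intervalIntegral.integral_const_mul, intervalIntegral.integral_const_mul, integral_rpow (Or.inl (by linarith)),
    integral_rpow (Or.inl (by linarith)), sub_add_cancel, show 2 * α - 1 + 1 = 2 * α by ring,
    Real.zero_rpow hα.ne', Real.zero_rpow (by positivity)]
  rw [← htt]
  field_simp
  ring

theorem half_rpow_le_integral_cdfIntegrand (hα : 0 < α) (ht : 0 ≤ t) (ht1 : t ≤ 1) :
    t ^ (2 * α) / 2 ≤ ∫ x in (0 : ℝ)..1, cdfIntegrand α t x := by
  have hhead : t ^ (2 * α) / 2 ≤ ∫ x in (0 : ℝ)..t, cdfIntegrand α t x := by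
    rw [← integral_mul_rpow_sub_rpow hα ht]
    refine integral_mono_on ht ?_ (intervalIntegrable_cdfIntegrand hα 0 t)
      fun x hx => mul_sub_rpow_le_cdfIntegrand hα.le hx.1 hx.2 ht1
    exact ((intervalIntegrable_rpow' (by linarith)).const_mul α).mul_continuousOn
      (continuousOn_const.sub (continuousOn_id.rpow_const fun _ _ => Or.inr hα.le))
  have htail : 0 ≤ ∫ x in t..1, cdfIntegrand α t x :=
    integral_nonneg ht1 fun x hx => cdfIntegrand_nonneg hα.le (ht.trans hx.1) hx.2 ht
  rw [← integral_add_adjacent_intervals (intervalIntegrable_cdfIntegrand hα 0 t)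
    (intervalIntegrable_cdfIntegrand hα t 1)]
  linarith

end

/-- Let `α ∈ (0, 1/2)` and let `W = |X - Y|` for `X, Y` i.i.d. on `[0,1]`
with density `h t = α t^(α-1)`, so that the CDF of `W` is
`F_W t = 2 ∫_0^1 h x (H (x+t) - H x) dx` with `H s = (min s 1)^α`.
Then `F_W t ≥ t^(2α)` for all `t ∈ (0, 1/2]`. -/
theorem cdf_lower_bound (α : ℝ) (hα : α ∈ Set.Ioo (0 : ℝ) (1 / 2)) :
    ∀ t ∈ Set.Ioc (0 : ℝ) (1 / 2),
      t ^ (2 * α) ≤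
        2 * ∫ x in (0 : ℝ)..1,
          (α * x ^ (α - 1)) * ((min (x + t) 1) ^ α - x ^ α) := by
  rintro t ⟨ht0, ht1⟩
  have := half_rpow_le_integral_cdfIntegrand hα.1 ht0.le (by linarith)
  unfold cdfIntegrand at this
  linarith
end

section
/- Let α ∈ (0, 1/4], let X, Y be i.i.d. on [0,1] with density h(t) = α t^{α-1}, and let W = |X-Y| with CDF F_W. Then for all t ∈ (0, 1/2], the density satisfies F_W'(t) ≤ 4α t^{2α-1}. -/
open MeasureTheory intervalIntegral

/-- Let `α ∈ (0, 1/4]` and let `W = |X - Y|` for `X, Y` i.i.d. on `[0,1]`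
with density `h t = α t^(α-1)`, so that the density of `W` is
`F_W' t = 2 ∫_0^{1-t} h x · h (x+t) dx`. Then `F_W' t ≤ 4 α t^(2α-1)` for
all `t ∈ (0, 1/2]`. -/
theorem density_upper_bound (α : ℝ) (hα : α ∈ Set.Ioc (0 : ℝ) (1 / 4)) :
    ∀ t ∈ Set.Ioc (0 : ℝ) (1 / 2),
      2 * ∫ x in (0 : ℝ)..(1 - t),
          (α * x ^ (α - 1)) * (α * (x + t) ^ (α - 1))
        ≤ 4 * α * t ^ (2 * α - 1) := by
  intro t ht
  obtain ⟨hα0, hα4⟩ := hα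
  obtain ⟨ht0, ht2⟩ := ht
  have ht1 : t ≤ 1 - t := by linarith
  have h1t : (0:ℝ) < 1 - t := by linarith
  set f : ℝ → ℝ := fun x => (α * x ^ (α - 1)) * (α * (x + t) ^ (α - 1)) with hf
  have hmeas : Measurable f := by
    simp only [hf]
    fun_prop
  -- comparison function near 0
  set g : ℝ → ℝ := fun x => α ^ 2 * t ^ (α - 1) * x ^ (α - 1) with hg
  have hg_int : IntervalIntegrable g volume 0 t :=
    (intervalIntegral.intervalIntegrable_rpow' (by linarith)).const_mul _
  have hfg : ∀ x ∈ Set.Icc (0:ℝ) t, f x ≤ g x := by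
    intro x hx
    rcases eq_or_lt_of_le hx.1 with h0 | h0
    · simp [hf, hg, ← h0, Real.zero_rpow (by linarith : α - 1 ≠ 0)]
    · have h1 : (x + t) ^ (α - 1) ≤ t ^ (α - 1) :=
        Real.rpow_le_rpow_of_nonpos ht0 (by linarith) (by linarith)
      have h2 : (0:ℝ) ≤ x ^ (α - 1) := Real.rpow_nonneg h0.le _
      simp only [hf, hg]
      have key := mul_le_mul_of_nonneg_left h1
        (by positivity : (0:ℝ) ≤ α ^ 2 * x ^ (α - 1))
      nlinarith [key]
  have hf_nonneg : ∀ x : ℝ, 0 < x → 0 ≤ f x := by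
    intro x hx
    have h1 := Real.rpow_nonneg hx.le (α - 1)
    have h2 := Real.rpow_nonneg (by positivity : (0:ℝ) ≤ x + t) (α - 1)
    simp only [hf]; positivity
  -- integrability of f on [0, t]
  have hf_int1 : IntervalIntegrable f volume 0 t := by
    apply hg_int.mono_fun hmeas.aestronglyMeasurable
    rw [Filter.EventuallyLE, ae_restrict_iff' measurableSet_uIoc]
    filter_upwards with x hx
    rw [Set.uIoc_of_le ht0.le] at hx
    have h1 : 0 ≤ f x := hf_nonneg x hx.1
    have h2 : f x ≤ g x := hfg x ⟨hx.1.le, hx.2⟩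
    simp only [Real.norm_eq_abs]
    rw [abs_of_nonneg h1, abs_of_nonneg (le_trans h1 h2)]
    exact h2
  -- f is continuous on [t, 1-t]
  have hf_cont : ContinuousOn f (Set.uIcc t (1 - t)) := by
    rw [Set.uIcc_of_le ht1]
    have c1 : ContinuousOn (fun x : ℝ => x ^ (α - 1)) (Set.Icc t (1 - t)) :=
      fun x hx => (Real.continuousAt_rpow_const x _
        (Or.inl (ne_of_gt (lt_of_lt_of_le ht0 hx.1)))).continuousWithinAt
    have c2 : ContinuousOn (fun x : ℝ => (x + t) ^ (α - 1)) (Set.Icc t (1 - t)) := by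
      intro x hx
      have hx0 : (0:ℝ) < x := lt_of_lt_of_le ht0 hx.1
      exact (((continuous_id.add continuous_const).continuousAt).rpow_const
        (Or.inl (show id x + t ≠ 0 by simp only [id_eq]; positivity))).continuousWithinAt
    exact (continuousOn_const.mul c1).mul (continuousOn_const.mul c2)
  have hf_int2 : IntervalIntegrable f volume t (1 - t) := hf_cont.intervalIntegrable
  -- split the integral
  have hsplit : ∫ x in (0:ℝ)..(1 - t), f x
      = (∫ x in (0:ℝ)..t, f x) + ∫ x in t..(1 - t), f x :=
    (integral_add_adjacent_intervals hf_int1 hf_int2).symm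
  -- bound the first piece
  have hI1 : (∫ x in (0:ℝ)..t, f x) ≤ α * t ^ (2 * α - 1) := by
    have h1 : (∫ x in (0:ℝ)..t, f x) ≤ ∫ x in (0:ℝ)..t, g x :=
      intervalIntegral.integral_mono_on ht0.le hf_int1 hg_int hfg
    have h2 : (∫ x in (0:ℝ)..t, g x) = α * t ^ (2 * α - 1) := by
      simp only [hg]
      rw [intervalIntegral.integral_const_mul, integral_rpow (Or.inl (by linarith))]
      rw [Real.zero_rpow (by linarith : α - 1 + 1 ≠ 0)]
      have : α - 1 + 1 = α := by ring
      rw [this]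
      rw [show α ^ 2 * t ^ (α - 1) * ((t ^ α - 0) / α) = α * (t ^ (α - 1) * t ^ α) by
        field_simp; ring]
      rw [← Real.rpow_add ht0]
      ring_nf
    linarith
  -- bound the second piece
  have hI2 : (∫ x in t..(1 - t), f x) ≤ 2 * α ^ 2 * t ^ (2 * α - 1) := by
    set g2 : ℝ → ℝ := fun x => α ^ 2 * x ^ (2 * α - 2) with hg2
    have hg2_int : IntervalIntegrable g2 volume t (1 - t) := by
      apply ContinuousOn.intervalIntegrable
      rw [Set.uIcc_of_le ht1]
      exact continuousOn_const.mul (fun x hx =>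
        (Real.continuousAt_rpow_const x _
          (Or.inl (ne_of_gt (lt_of_lt_of_le ht0 hx.1)))).continuousWithinAt)
    have hmono : ∀ x ∈ Set.Icc t (1 - t), f x ≤ g2 x := by
      intro x hx
      have hx0 : 0 < x := lt_of_lt_of_le ht0 hx.1
      have h1 : (x + t) ^ (α - 1) ≤ x ^ (α - 1) :=
        Real.rpow_le_rpow_of_nonpos hx0 (by linarith) (by linarith)
      have h2 : (0:ℝ) ≤ x ^ (α - 1) := Real.rpow_nonneg hx0.le _
      have h3 : x ^ (α - 1) * x ^ (α - 1) = x ^ (2 * α - 2) := by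
        rw [← Real.rpow_add hx0]; ring_nf
      simp only [hf, hg2]
      have key := mul_le_mul_of_nonneg_left h1
        (by positivity : (0:ℝ) ≤ α ^ 2 * x ^ (α - 1))
      have h4 : α ^ 2 * (x ^ (α - 1) * x ^ (α - 1)) = α ^ 2 * x ^ (2 * α - 2) := by
        rw [h3]
      nlinarith [key, h4]
    have h1 : (∫ x in t..(1 - t), f x) ≤ ∫ x in t..(1 - t), g2 x :=
      intervalIntegral.integral_mono_on ht1 hf_int2 hg2_int hmono
    have h2 : (∫ x in t..(1 - t), g2 x) ≤ 2 * α ^ 2 * t ^ (2 * α - 1) := by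
      simp only [hg2]
      rw [intervalIntegral.integral_const_mul,
        integral_rpow (Or.inr ⟨by intro h; linarith,
          by rw [Set.uIcc_of_le ht1]; exact fun h => absurd h.1 (by linarith)⟩)]
      have he : 2 * α - 2 + 1 = 2 * α - 1 := by ring
      rw [he]
      have hnum1 : (0:ℝ) ≤ (1 - t) ^ (2 * α - 1) := Real.rpow_nonneg h1t.le _
      have hnum2 : (0:ℝ) < t ^ (2 * α - 1) := Real.rpow_pos_of_pos ht0 _
      have hden : 2 * α - 1 < 0 := by linarith
      have haux : ((1 - t) ^ (2 * α - 1) - t ^ (2 * α - 1)) / (2 * α - 1)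
          ≤ 2 * t ^ (2 * α - 1) := by
        rw [div_le_iff_of_neg hden]
        nlinarith [mul_nonneg (by linarith : (0:ℝ) ≤ 1 - 4 * α) hnum2.le]
      have := mul_le_mul_of_nonneg_left haux (by positivity : (0:ℝ) ≤ α ^ 2)
      nlinarith [this]
    linarith
  rw [hsplit]
  have hT : (0:ℝ) < t ^ (2 * α - 1) := Real.rpow_pos_of_pos ht0 _
  nlinarith [mul_le_mul_of_nonneg_right
    (show 4 * α ^ 2 ≤ 2 * α by nlinarith) hT.le]
end

section
/- For every ε ∈ (0,1), there exists a continuous random variable W on [0,1] (expressible as |X-Y| for i.i.d. X,Y with density α t^{α-1} for suitable α) whose CDF F_W satisfies F_W(x+y) ≤ ε F_W(x) + F_W(y) for all 0 ≤ x ≤ y. -/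
open MeasureTheory ProbabilityTheory Set
open scoped ENNReal

/-!
Take `α = ε / 8` and let `X, Y` be the coordinates under the square of the law `μ` with
distribution function `t ^ α` on `[0, 1]`. For `0 < x ≤ y < 1`, by symmetry
`P(y < |X - Y| ≤ x + y) ≤ 2 ∫ μ(t + y, t + x + y] dμ(t)`, and since the density is decreasing,
`μ(t + y, t + x + y] ≤ α x max(t, x) ^ (α - 1)`. Integrating separately over `t ≤ x` and `t > x`
bounds the increment by `2 (α + α² / (1 - 2α)) x ^ (2α) ≤ 4α x ^ (2α)`, whereas
`P(|X - Y| ≤ x) ≥ P(X ≤ x, Y ≤ x) = x ^ (2α)`.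
-/

lemma lintegral_Ioc_zero_rpow {r x : ℝ} (hr : -1 < r) (hx : 0 ≤ x) :
    ∫⁻ t in Ioc 0 x, ENNReal.ofReal (t ^ r) = ENNReal.ofReal (x ^ (r + 1) / (r + 1)) := by
  have hnonneg : 0 ≤ᵐ[volume.restrict (Ioc 0 x)] fun t : ℝ => t ^ r := by
    filter_upwards [ae_restrict_mem measurableSet_Ioc] with t ht
    exact Real.rpow_nonneg ht.1.le r
  rw [← ofReal_integral_eq_lintegral_ofReal (intervalIntegral.intervalIntegrable_rpow' hr).1
    hnonneg, ← intervalIntegral.integral_of_le hx, integral_rpow (Or.inl hr),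
    Real.zero_rpow (by linarith), sub_zero]

lemma lintegral_Ioi_rpow_of_lt {r a : ℝ} (hr : r < -1) (ha : 0 < a) :
    ∫⁻ t in Ioi a, ENNReal.ofReal (t ^ r) = ENNReal.ofReal (-a ^ (r + 1) / (r + 1)) := by
  have hnonneg : 0 ≤ᵐ[volume.restrict (Ioi a)] fun t : ℝ => t ^ r := by
    filter_upwards [ae_restrict_mem measurableSet_Ioi] with t ht
    exact Real.rpow_nonneg (ha.trans ht).le r
  rw [← ofReal_integral_eq_lintegral_ofReal (integrableOn_Ioi_rpow_of_lt hr ha) hnonneg,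
    integral_Ioi_rpow_of_lt hr ha]

section Difference

variable (μ : Measure ℝ) [SFinite μ]

lemma measure_prod_sub_mem_Ioc (ν : Measure ℝ) (a b : ℝ) :
    (ν.prod μ) {p : ℝ × ℝ | p.2 - p.1 ∈ Ioc a b} = ∫⁻ t, μ (Ioc (t + a) (t + b)) ∂ν := by
  have hA : MeasurableSet {p : ℝ × ℝ | p.2 - p.1 ∈ Ioc a b} :=
    (measurable_snd.sub measurable_fst) measurableSet_Ioc
  rw [Measure.prod_apply hA]
  refine lintegral_congr fun t => congrArg μ (ext fun s => ?_)
  simp only [mem_preimage, mem_ofPred_eq, mem_Ioc]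
  constructor <;> rintro ⟨h₁, h₂⟩ <;> constructor <;> linarith

lemma measure_prod_self_abs_sub_mem_Ioc_le (a b : ℝ) :
    (μ.prod μ) {p : ℝ × ℝ | |p.1 - p.2| ∈ Ioc a b} ≤ 2 * ∫⁻ t, μ (Ioc (t + a) (t + b)) ∂μ := by
  set A := {p : ℝ × ℝ | p.2 - p.1 ∈ Ioc a b}
  have hA : MeasurableSet A := (measurable_snd.sub measurable_fst) measurableSet_Ioc
  have hsub : {p : ℝ × ℝ | |p.1 - p.2| ∈ Ioc a b} ⊆ A ∪ Prod.swap ⁻¹' A := by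
    intro p hp
    rcases abs_choice (p.1 - p.2) with h | h <;> rw [mem_ofPred_eq, h] at hp
    · exact Or.inr hp
    · exact Or.inl (by simpa [A] using hp)
  calc (μ.prod μ) {p : ℝ × ℝ | |p.1 - p.2| ∈ Ioc a b}
      ≤ (μ.prod μ) A + (μ.prod μ) (Prod.swap ⁻¹' A) :=
        (measure_mono hsub).trans (measure_union_le _ _)
    _ = 2 * ∫⁻ t, μ (Ioc (t + a) (t + b)) ∂μ := by
      rw [← Measure.map_apply measurable_swap hA, Measure.prod_swap, ← two_mul,
        measure_prod_sub_mem_Ioc]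

lemma measure_Ioc_zero_sq_le_prod_abs_sub_le (s : ℝ) :
    μ (Ioc 0 s) ^ 2 ≤ (μ.prod μ) {p : ℝ × ℝ | |p.1 - p.2| ≤ s} := by
  rw [sq, ← Measure.prod_prod]
  refine measure_mono fun p ⟨⟨h₁, h₂⟩, h₃, h₄⟩ => ?_
  rw [mem_ofPred_eq, abs_le]
  constructor <;> linarith

end Difference

section PowerDistribution

noncomputable def powerDensity (α : ℝ) : ℝ → ℝ≥0∞ :=
  fun t => if t ∈ Ioc (0 : ℝ) 1 then ENNReal.ofReal (α * t ^ (α - 1)) else 0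

noncomputable def powerMeasure (α : ℝ) : Measure ℝ := volume.withDensity (powerDensity α)

variable {α : ℝ}

lemma powerDensity_eq_indicator (α : ℝ) :
    powerDensity α = (Ioc 0 1).indicator fun t => ENNReal.ofReal (α * t ^ (α - 1)) := by
  ext t
  simp only [powerDensity, indicator_apply]

lemma powerMeasure_apply (α : ℝ) {s : Set ℝ} (hs : MeasurableSet s) :
    powerMeasure α s = ∫⁻ t in Ioc 0 1 ∩ s, ENNReal.ofReal (α * t ^ (α - 1)) := by
  rw [powerMeasure, withDensity_apply _ hs, powerDensity_eq_indicator,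
    lintegral_indicator measurableSet_Ioc, Measure.restrict_restrict measurableSet_Ioc]

lemma lintegral_powerMeasure (α : ℝ) (g : ℝ → ℝ≥0∞) :
    ∫⁻ t, g t ∂powerMeasure α = ∫⁻ t in Ioc 0 1, ENNReal.ofReal (α * t ^ (α - 1)) * g t := by
  have hmeas : Measurable (powerDensity α) := by
    rw [powerDensity_eq_indicator]
    exact (Measurable.ennreal_ofReal (by fun_prop)).indicator measurableSet_Ioc
  have hfin : ∀ᵐ t ∂volume, powerDensity α t < ∞ := ae_of_all _ fun t => by
    unfold powerDensity; split_ifs <;> simp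
  rw [powerMeasure, lintegral_withDensity_eq_lintegral_mul_non_measurable _ hmeas hfin,
    ← lintegral_indicator measurableSet_Ioc, powerDensity_eq_indicator]
  simp only [Pi.mul_apply, indicator_mul_left]

lemma lintegral_Ioc_zero_powerDensity (hα : 0 < α) {x : ℝ} (hx : 0 ≤ x) :
    ∫⁻ t in Ioc 0 x, ENNReal.ofReal (α * t ^ (α - 1)) = ENNReal.ofReal (x ^ α) := by
  simp_rw [ENNReal.ofReal_mul hα.le]
  rw [lintegral_const_mul' _ _ ENNReal.ofReal_ne_top,
    lintegral_Ioc_zero_rpow (by linarith) hx, sub_add_cancel, ← ENNReal.ofReal_mul hα.le,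
    mul_div_cancel₀ _ hα.ne']

lemma powerMeasure_Ioc_zero (hα : 0 < α) {x : ℝ} (hx : 0 ≤ x) :
    powerMeasure α (Ioc 0 x) = ENNReal.ofReal (min 1 x ^ α) := by
  rw [powerMeasure_apply α measurableSet_Ioc, Ioc_inter_Ioc, sup_idem,
    lintegral_Ioc_zero_powerDensity hα (le_min zero_le_one hx)]

lemma isProbabilityMeasure_powerMeasure (hα : 0 < α) : IsProbabilityMeasure (powerMeasure α) :=
  ⟨by rw [powerMeasure_apply α MeasurableSet.univ, inter_univ,
    lintegral_Ioc_zero_powerDensity hα zero_le_one, Real.one_rpow, ENNReal.ofReal_one]⟩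

lemma powerMeasure_Ioc_le (hα₀ : 0 ≤ α) (hα₁ : α ≤ 1) {s a : ℝ} (hs : 0 < s) (hsa : s ≤ a)
    (b : ℝ) : powerMeasure α (Ioc a b) ≤ ENNReal.ofReal (α * s ^ (α - 1) * (b - a)) := by
  have hdens : ∀ t ∈ Ioc 0 1 ∩ Ioc a b,
      ENNReal.ofReal (α * t ^ (α - 1)) ≤ ENNReal.ofReal (α * s ^ (α - 1)) := fun t ht =>
    ENNReal.ofReal_le_ofReal <| mul_le_mul_of_nonneg_left
      (Real.rpow_le_rpow_of_nonpos hs (hsa.trans ht.2.1.le) (by linarith)) hα₀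
  calc powerMeasure α (Ioc a b)
      ≤ ∫⁻ _ in Ioc 0 1 ∩ Ioc a b, ENNReal.ofReal (α * s ^ (α - 1)) := by
        rw [powerMeasure_apply α measurableSet_Ioc]
        exact setLIntegral_mono' (measurableSet_Ioc.inter measurableSet_Ioc) hdens
    _ ≤ ∫⁻ _ in Ioc a b, ENNReal.ofReal (α * s ^ (α - 1)) :=
        lintegral_mono_set inter_subset_right
    _ = ENNReal.ofReal (α * s ^ (α - 1) * (b - a)) := by
        rw [setLIntegral_const, Real.volume_Ioc,
          ← ENNReal.ofReal_mul (mul_nonneg hα₀ (Real.rpow_nonneg hs.le _))]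

lemma powerMeasure_Ioc_shift_le (hα₀ : 0 ≤ α) (hα₁ : α ≤ 1) {s t x y : ℝ} (hs : 0 < s)
    (hst : s ≤ t + y) :
    powerMeasure α (Ioc (t + y) (t + (x + y))) ≤ ENNReal.ofReal (α * s ^ (α - 1) * x) := by
  simpa only [add_sub_add_left_eq_sub, add_sub_cancel_right]
    using powerMeasure_Ioc_le hα₀ hα₁ hs hst (t + (x + y))

end PowerDistribution

section Increment

variable {α x y : ℝ}

lemma setLIntegral_Ioc_powerMeasure_Ioc_shift_le (hα₀ : 0 < α) (hα₁ : α ≤ 1) (hx : 0 < x)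
    (hxy : x ≤ y) :
    ∫⁻ t in Ioc 0 x, ENNReal.ofReal (α * t ^ (α - 1)) * powerMeasure α (Ioc (t + y) (t + (x + y)))
      ≤ ENNReal.ofReal (α * x ^ (2 * α)) := by
  calc ∫⁻ t in Ioc 0 x,
        ENNReal.ofReal (α * t ^ (α - 1)) * powerMeasure α (Ioc (t + y) (t + (x + y)))
      ≤ ∫⁻ t in Ioc 0 x, ENNReal.ofReal (α * t ^ (α - 1)) * ENNReal.ofReal (α * x ^ (α - 1) * x) :=
        setLIntegral_mono' measurableSet_Ioc fun t ht => mul_le_mul_right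
          (powerMeasure_Ioc_shift_le hα₀.le hα₁ hx (by linarith [ht.1])) _
    _ = ENNReal.ofReal (α * x ^ (2 * α)) := by
        rw [lintegral_mul_const' _ _ ENNReal.ofReal_ne_top,
          lintegral_Ioc_zero_powerDensity hα₀ hx.le, ← ENNReal.ofReal_mul (by positivity)]
        congr 1
        rw [mul_assoc, ← Real.rpow_add_one hx.ne', sub_add_cancel, mul_left_comm,
          ← Real.rpow_add hx]
        ring_nf

lemma setLIntegral_Ioi_powerMeasure_Ioc_shift_le (hα₀ : 0 < α) (hα₁ : α < 1 / 2) (hx : 0 < x)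
    (hy : 0 ≤ y) :
    ∫⁻ t in Ioi x, ENNReal.ofReal (α * t ^ (α - 1)) * powerMeasure α (Ioc (t + y) (t + (x + y)))
      ≤ ENNReal.ofReal (α ^ 2 / (1 - 2 * α) * x ^ (2 * α)) := by
  calc ∫⁻ t in Ioi x,
        ENNReal.ofReal (α * t ^ (α - 1)) * powerMeasure α (Ioc (t + y) (t + (x + y)))
      ≤ ∫⁻ t in Ioi x, ENNReal.ofReal (α ^ 2 * x) * ENNReal.ofReal (t ^ (2 * α - 2)) := by
        refine setLIntegral_mono' measurableSet_Ioi fun t ht => ?_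
        have ht₀ : 0 < t := hx.trans ht
        refine (mul_le_mul_right (powerMeasure_Ioc_shift_le hα₀.le (by linarith) ht₀
          (by linarith)) _).trans_eq ?_
        rw [← ENNReal.ofReal_mul (by positivity), ← ENNReal.ofReal_mul (by positivity),
          show 2 * α - 2 = (α - 1) + (α - 1) by ring, Real.rpow_add ht₀]
        ring_nf
    _ = ENNReal.ofReal (α ^ 2 / (1 - 2 * α) * x ^ (2 * α)) := by
        rw [lintegral_const_mul' _ _ ENNReal.ofReal_ne_top,
          lintegral_Ioi_rpow_of_lt (by linarith) hx, ← ENNReal.ofReal_mul (by positivity)]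
        congr 1
        rw [show 2 * α - 2 + 1 = 2 * α - 1 by ring, neg_div, ← div_neg, neg_sub, mul_div_assoc',
          mul_assoc, ← Real.rpow_one_add' hx.le (by linarith)]
        ring_nf

lemma lintegral_powerMeasure_Ioc_shift_le (hα₀ : 0 < α) (hα₁ : α < 1 / 2) (hx : 0 < x)
    (hxy : x ≤ y) :
    ∫⁻ t, powerMeasure α (Ioc (t + y) (t + (x + y))) ∂powerMeasure α
      ≤ ENNReal.ofReal ((α + α ^ 2 / (1 - 2 * α)) * x ^ (2 * α)) := by
  have hcover : Ioc (0 : ℝ) 1 ⊆ Ioc 0 x ∪ Ioi x := fun t ht =>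
    (le_or_gt t x).imp (fun h => ⟨ht.1, h⟩) id
  rw [lintegral_powerMeasure, add_mul, ENNReal.ofReal_add (by positivity)
    (mul_nonneg (div_nonneg (sq_nonneg α) (by linarith)) (by positivity))]
  exact (lintegral_mono_set hcover).trans <| (lintegral_union_le _ _ _).trans <| add_le_add
    (setLIntegral_Ioc_powerMeasure_Ioc_shift_le hα₀ (by linarith) hx hxy)
    (setLIntegral_Ioi_powerMeasure_Ioc_shift_le hα₀ hα₁ hx (hx.le.trans hxy))

end Increment

section AbsDifference

variable {α : ℝ}

lemma ofReal_min_one_rpow_le_prod_powerMeasure (hα : 0 < α) {x : ℝ} (hx : 0 ≤ x) :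
    ENNReal.ofReal (min 1 x ^ (2 * α))
      ≤ ((powerMeasure α).prod (powerMeasure α)) {p : ℝ × ℝ | |p.1 - p.2| ≤ x} := by
  have := isProbabilityMeasure_powerMeasure hα
  have := measure_Ioc_zero_sq_le_prod_abs_sub_le (powerMeasure α) x
  rwa [powerMeasure_Ioc_zero hα hx, ← ENNReal.ofReal_pow (by positivity), ← Real.rpow_natCast,
    ← Real.rpow_mul (le_min zero_le_one hx), mul_comm] at this

lemma prod_powerMeasure_abs_sub_le_add (hα₀ : 0 < α) (hα₁ : α ≤ 1 / 3) {x y : ℝ}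
    (hx : 0 ≤ x) (hxy : x ≤ y) :
    ((powerMeasure α).prod (powerMeasure α)) {p : ℝ × ℝ | |p.1 - p.2| ≤ x + y}
      ≤ ((powerMeasure α).prod (powerMeasure α)) {p : ℝ × ℝ | |p.1 - p.2| ≤ y}
        + ENNReal.ofReal (4 * α)
          * ((powerMeasure α).prod (powerMeasure α)) {p : ℝ × ℝ | |p.1 - p.2| ≤ x} := by
  have := isProbabilityMeasure_powerMeasure hα₀
  set ν := (powerMeasure α).prod (powerMeasure α)
  rcases hx.eq_or_lt with rfl | hx
  · simp only [zero_add]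
    exact le_self_add
  rcases le_or_gt 1 y with hy | hy
  · have hfull : ν {p : ℝ × ℝ | |p.1 - p.2| ≤ y} = 1 := by
      have hlower := ofReal_min_one_rpow_le_prod_powerMeasure hα₀ (zero_le_one.trans hy)
      rw [min_eq_left hy, Real.one_rpow, ENNReal.ofReal_one] at hlower
      exact prob_le_one.antisymm hlower
    rw [hfull]
    exact prob_le_one.trans le_self_add
  have hlower : ENNReal.ofReal (x ^ (2 * α)) ≤ ν {p : ℝ × ℝ | |p.1 - p.2| ≤ x} := by
    simpa only [min_eq_right (hxy.trans hy.le)]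
      using ofReal_min_one_rpow_le_prod_powerMeasure hα₀ hx.le
  have hsplit : {p : ℝ × ℝ | |p.1 - p.2| ≤ x + y}
      ⊆ {p : ℝ × ℝ | |p.1 - p.2| ≤ y} ∪ {p : ℝ × ℝ | |p.1 - p.2| ∈ Ioc y (x + y)} :=
    fun p hp => (le_or_gt |p.1 - p.2| y).imp id fun h => ⟨h, hp⟩
  have hc : α ^ 2 / (1 - 2 * α) ≤ α := by
    rw [div_le_iff₀ (by linarith)]
    nlinarith
  calc ν {p : ℝ × ℝ | |p.1 - p.2| ≤ x + y}
      ≤ ν {p : ℝ × ℝ | |p.1 - p.2| ≤ y} + ν {p : ℝ × ℝ | |p.1 - p.2| ∈ Ioc y (x + y)} :=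
        (measure_mono hsplit).trans (measure_union_le _ _)
    _ ≤ ν {p : ℝ × ℝ | |p.1 - p.2| ≤ y}
        + 2 * ENNReal.ofReal ((α + α ^ 2 / (1 - 2 * α)) * x ^ (2 * α)) := by
        gcongr
        refine (measure_prod_self_abs_sub_mem_Ioc_le _ _ _).trans ?_
        gcongr
        exact lintegral_powerMeasure_Ioc_shift_le hα₀ (by linarith) hx hxy
    _ ≤ ν {p : ℝ × ℝ | |p.1 - p.2| ≤ y} + ENNReal.ofReal (4 * α * x ^ (2 * α)) := by
        rw [← ENNReal.ofReal_ofNat 2, ← ENNReal.ofReal_mul zero_le_two]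
        gcongr _ + ?_
        exact ENNReal.ofReal_le_ofReal (by nlinarith [Real.rpow_nonneg hx.le (2 * α)])
    _ ≤ ν {p : ℝ × ℝ | |p.1 - p.2| ≤ y}
        + ENNReal.ofReal (4 * α) * ν {p : ℝ × ℝ | |p.1 - p.2| ≤ x} := by
        rw [ENNReal.ofReal_mul (by positivity)]
        gcongr

end AbsDifference

/-- For every `ε ∈ (0,1)` there exists a continuous random variable `W` on
`[0,1]`, expressible as `|X - Y|` for i.i.d. `X, Y` with density `α t^(α-1)`
on `[0,1]` for a suitable `α ∈ (0,1/2)`, whose CDF `F_W` satisfies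
`F_W (x+y) ≤ ε F_W x + F_W y` for all `0 ≤ x ≤ y`. -/
theorem strongly_subadditive_cdf_exists (ε : ℝ) (hε : ε ∈ Set.Ioo (0 : ℝ) 1) :
    ∃ α ∈ Set.Ioo (0 : ℝ) (1 / 2),
      ∃ (Ω : Type) (_ : MeasureSpace Ω) (P : Measure Ω)
        (_ : IsProbabilityMeasure P) (X Y : Ω → ℝ),
        Measurable X ∧ Measurable Y ∧ IndepFun X Y P ∧
        Measure.map X P = volume.withDensity
          (fun t => if t ∈ Set.Ioc (0 : ℝ) 1 then ENNReal.ofReal (α * t ^ (α - 1)) else 0) ∧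
        Measure.map Y P = volume.withDensity
          (fun t => if t ∈ Set.Ioc (0 : ℝ) 1 then ENNReal.ofReal (α * t ^ (α - 1)) else 0) ∧
        ∀ x y : ℝ, 0 ≤ x → x ≤ y →
          (P {ω | |X ω - Y ω| ≤ x + y}).toReal
            ≤ ε * (P {ω | |X ω - Y ω| ≤ x}).toReal
              + (P {ω | |X ω - Y ω| ≤ y}).toReal := by
  obtain ⟨hε₀, hε₁⟩ := hε
  set α := ε / 8 with hαε
  have hα₀ : 0 < α := by positivity
  have := isProbabilityMeasure_powerMeasure hα₀
  refine ⟨α, ⟨hα₀, by linarith⟩, ℝ × ℝ, inferInstance, (powerMeasure α).prod (powerMeasure α),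
    inferInstance, Prod.fst, Prod.snd, measurable_fst, measurable_snd,
    indepFun_prod measurable_id measurable_id, measurePreserving_fst.map_eq,
    measurePreserving_snd.map_eq, fun x y hx hxy => ?_⟩
  have h := prod_powerMeasure_abs_sub_le_add hα₀ (by linarith) hx hxy
  rw [← ENNReal.toReal_le_toReal (by finiteness) (by finiteness), ENNReal.toReal_add
    (by finiteness) (by finiteness), ENNReal.toReal_mul, ENNReal.toReal_ofReal (by linarith)] at h
  refine h.trans (le_of_eq_of_le (add_comm _ _) ?_)
  gcongr
  linarith
end

section
/- Let I ⊆ ℤ, and for n ∈ I let (S_n, d_n) be metric spaces such that for all m < n in I, all distinct x₁,x₂ ∈ S_m and distinct y₁,y₂ ∈ S_n, one has d_m(x₁,x₂) ≤ 2 d_n(y₁,y₂). Fix points s_n ∈ S_n and let S be the set of x ∈ Π_{n∈I} S_n that are eventually constant (x_n = s_n for all large n). For x ≠ y define n(x,y) = sup{n : x_n ≠ y_n} and d(x,y) = d_{n(x,y)}(x_{n(x,y)}, y_{n(x,y)}), and d(x,x) = 0. Then d is a metric on S. -/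
/-- The selection space: let `I ⊆ ℤ` and `(S n, d_n)` metric spaces with the
factor-2 domination `d_m(x₁,x₂) ≤ 2 d_n(y₁,y₂)` for `m < n` in `I` and distinct
pairs. On the set of eventually constant vectors, `D x y = d_{n(x,y)}(x_{n(x,y)}, y_{n(x,y)})`
(where `n(x,y)` is the largest index of disagreement, and `D x x = 0`) is a metric. -/
theorem selection_space_is_metric
    (I : Set ℤ) (S : ℤ → Type*) [∀ n, MetricSpace (S n)] (s : ∀ n, S n)
    (hdom : ∀ m ∈ I, ∀ n ∈ I, m < n →
      ∀ x₁ x₂ : S m, x₁ ≠ x₂ → ∀ y₁ y₂ : S n, y₁ ≠ y₂ →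
        dist x₁ x₂ ≤ 2 * dist y₁ y₂)
    (Sel : Set (∀ n, S n))
    (hSel : Sel = {x | (∀ n ∉ I, x n = s n) ∧ ∃ N : ℤ, ∀ n, N ≤ n → x n = s n})
    (D : (∀ n, S n) → (∀ n, S n) → ℝ)
    (hD_self : ∀ x, D x x = 0)
    (hD_spec : ∀ x y, x ≠ y → ∀ n : ℤ, x n ≠ y n → (∀ m, n < m → x m = y m) →
      D x y = dist (x n) (y n)) :
    ∀ x ∈ Sel, ∀ y ∈ Sel, ∀ z ∈ Sel,
      (0 ≤ D x y) ∧ (D x y = 0 ↔ x = y) ∧ (D x y = D y x) ∧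
      (D x z ≤ D x y + D y z) := by
  classical
  intro x hx y hy z hz
  rw [hSel] at hx hy hz
  obtain ⟨hxI, Nx, hNx⟩ := hx
  obtain ⟨hyI, Ny, hNy⟩ := hy
  obtain ⟨hzI, Nz, hNz⟩ := hz
  -- key: greatest disagreement index exists
  have key : ∀ (u v : ∀ n, S n), (∀ n ∉ I, u n = s n) → (∀ n ∉ I, v n = s n) →
      (∀ n, Nx ⊔ Ny ⊔ Nz ≤ n → u n = s n) → (∀ n, Nx ⊔ Ny ⊔ Nz ≤ n → v n = s n) →
      u ≠ v →
      ∃ n, n ∈ I ∧ u n ≠ v n ∧ (∀ m, n < m → u m = v m) ∧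
        (∀ m, u m ≠ v m → m ≤ n) ∧ D u v = dist (u n) (v n) := by
    intro u v huI hvI hNu hNv huv
    have hne : ∃ n, u n ≠ v n := by
      by_contra h; push_neg at h; exact huv (funext h)
    have hbdd : ∃ b : ℤ, ∀ n, u n ≠ v n → n ≤ b := by
      refine ⟨Nx ⊔ Ny ⊔ Nz, fun n hn => ?_⟩
      by_contra h; push_neg at h
      exact hn ((hNu n h.le).trans (hNv n h.le).symm)
    obtain ⟨n, hn, hmax⟩ :=
      Int.exists_greatest_of_bdd (P := fun n => u n ≠ v n) hbdd hne
    have hnI : n ∈ I := by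
      by_contra h
      exact hn ((huI n h).trans (hvI n h).symm)
    have hgt : ∀ m, n < m → u m = v m := fun m hm => by
      by_contra h
      exact absurd (hmax m h) (not_le.mpr hm)
    exact ⟨n, hnI, hn, hgt, hmax, hD_spec u v huv n hn hgt⟩
  have nn : ∀ (u v : ∀ n, S n), (∀ n ∉ I, u n = s n) → (∀ n ∉ I, v n = s n) →
      (∀ n, Nx ⊔ Ny ⊔ Nz ≤ n → u n = s n) → (∀ n, Nx ⊔ Ny ⊔ Nz ≤ n → v n = s n) →
      0 ≤ D u v := by
    intro u v h1 h2 h3 h4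
    by_cases huv : u = v
    · subst huv; rw [hD_self]
    · obtain ⟨n, -, -, -, -, hDuv⟩ := key u v h1 h2 h3 h4 huv
      rw [hDuv]; exact dist_nonneg
  have hNx' : ∀ n, Nx ⊔ Ny ⊔ Nz ≤ n → x n = s n := fun n h =>
    hNx n (le_trans (le_trans le_sup_left le_sup_left) h)
  have hNy' : ∀ n, Nx ⊔ Ny ⊔ Nz ≤ n → y n = s n := fun n h =>
    hNy n (le_trans (le_trans le_sup_right le_sup_left) h)
  have hNz' : ∀ n, Nx ⊔ Ny ⊔ Nz ≤ n → z n = s n := fun n h =>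
    hNz n (le_trans le_sup_right h)
  refine ⟨nn x y hxI hyI hNx' hNy', ?_, ?_, ?_⟩
  · constructor
    · intro h0
      by_contra hxy
      obtain ⟨n, -, hn, -, -, hDxy⟩ := key x y hxI hyI hNx' hNy' hxy
      rw [hDxy] at h0
      exact hn (dist_eq_zero.mp h0)
    · intro h; subst h; exact hD_self x
  · by_cases hxy : x = y
    · subst hxy; rfl
    · obtain ⟨n, -, hn, hgt, -, hDxy⟩ := key x y hxI hyI hNx' hNy' hxy
      rw [hDxy, hD_spec y x (Ne.symm hxy) n (Ne.symm hn)
        (fun m hm => (hgt m hm).symm), dist_comm]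
  · by_cases hxy : x = y
    · subst hxy; rw [hD_self]; simp
    by_cases hyz : y = z
    · subst hyz; rw [hD_self]; simp
    by_cases hxz : x = z
    · subst hxz
      rw [hD_self]
      exact add_nonneg (nn x y hxI hyI hNx' hNy') (nn y x hyI hxI hNy' hNx')
    obtain ⟨b, hbI, hb, hbgt, hbmax, hDxy⟩ := key x y hxI hyI hNx' hNy' hxy
    obtain ⟨c, hcI, hc, hcgt, hcmax, hDyz⟩ := key y z hyI hzI hNy' hNz' hyz
    obtain ⟨a, haI, ha, hagt, hamax, hDxz⟩ := key x z hxI hzI hNx' hNz' hxz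
    rcases lt_trichotomy b c with hbc | hbc | hbc
    · -- b < c : a = c, x a = y a
      have hca : c ≤ a := by
        refine hamax c (fun h => hc ?_)
        rw [← hbgt c hbc, h]
      have hac : a ≤ c := by
        by_contra h
        push_neg at h
        exact ha ((hbgt a (hbc.trans h)).trans (hcgt a h))
      have hac' : a = c := le_antisymm hac hca
      have hxya : x a = y a := hbgt a (hac' ▸ hbc)
      rw [hDxz, hDyz, ← hac', hxya]
      have := nn x y hxI hyI hNx' hNy'
      linarith
    · -- b = c
      subst hbc
      have hab : a ≤ b := by
        by_contra h
        push_neg at h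
        exact ha ((hbgt a h).trans (hcgt a h))
      rcases eq_or_lt_of_le hab with rfl | hab
      · rw [hDxz, hDxy, hDyz]
        exact dist_triangle _ _ _
      · have h1 := hdom a haI b hbI hab (x a) (z a) ha (x b) (y b) hb
        have h2 := hdom a haI b hbI hab (x a) (z a) ha (y b) (z b) hc
        rw [hDxz, hDxy, hDyz]
        linarith
    · -- c < b : a = b, y a = z a
      have hba : b ≤ a := by
        refine hamax b (fun h => hb ?_)
        rw [h, hcgt b hbc]
      have hab : a ≤ b := by
        by_contra h
        push_neg at h
        exact ha ((hbgt a h).trans (hcgt a (hbc.trans h)))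
      have hab' : a = b := le_antisymm hab hba
      have hyza : y a = z a := hcgt a (hab' ▸ hbc)
      rw [hDxz, hDxy, ← hab', ← hyza]
      have := nn y z hyI hzI hNy' hNz'
      linarith
end

section
/- In the selection space construction: under the factor-2 domination condition on the metrics d_n, if additionally each (S_n, d_n) is complete and either inf I > -∞ or sup_{z,w ∈ S_n} d_n(z,w) → 0 as n → -∞, then the selection space (S, d) is a complete metric space. -/
open Filter Topology

/-- Completeness of the selection space: under the factor-2 domination
condition, if each `(S n, d_n)` is a complete metric space with more than one
point and either `inf I > -∞` or `sup_{z,w ∈ S n} d_n(z,w) → 0` as `n → -∞`,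
then every Cauchy sequence for the selection distance `D` converges in the
selection space. -/
theorem selection_space_complete
    (I : Set ℤ) (S : ℤ → Type*) [∀ n, MetricSpace (S n)]
    [∀ n, CompleteSpace (S n)] (s : ∀ n, S n)
    (hpts : ∀ n ∈ I, ∃ a b : S n, a ≠ b)
    (hdom : ∀ m ∈ I, ∀ n ∈ I, m < n →
      ∀ x₁ x₂ : S m, x₁ ≠ x₂ → ∀ y₁ y₂ : S n, y₁ ≠ y₂ →
        dist x₁ x₂ ≤ 2 * dist y₁ y₂)
    (hsmall : BddBelow I ∨
      ∀ ε > (0 : ℝ), ∃ N : ℤ, ∀ n ∈ I, n ≤ N → ∀ z w : S n, dist z w < ε)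
    (Sel : Set (∀ n, S n))
    (hSel : Sel = {x | (∀ n ∉ I, x n = s n) ∧ ∃ N : ℤ, ∀ n, N ≤ n → x n = s n})
    (D : (∀ n, S n) → (∀ n, S n) → ℝ)
    (hD_self : ∀ x, D x x = 0)
    (hD_spec : ∀ x y, x ≠ y → ∀ n : ℤ, x n ≠ y n → (∀ m, n < m → x m = y m) →
      D x y = dist (x n) (y n)) :
    ∀ u : ℕ → ∀ n, S n, (∀ k, u k ∈ Sel) →
      (∀ ε > (0 : ℝ), ∃ K : ℕ, ∀ p q, K ≤ p → K ≤ q → D (u p) (u q) < ε) →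
      ∃ x ∈ Sel, ∀ ε > (0 : ℝ), ∃ K : ℕ, ∀ p, K ≤ p → D (u p) x < ε := by
  classical
  intro u hu hC
  subst hSel
  -- Key structural lemma: for distinct elements of `Sel` there is a greatest
  -- differing index, it lies in `I`, and `D` is the distance there.
  have key : ∀ x y : ∀ n, S n,
      ((∀ n ∉ I, x n = s n) ∧ ∃ N : ℤ, ∀ n, N ≤ n → x n = s n) →
      ((∀ n ∉ I, y n = s n) ∧ ∃ N : ℤ, ∀ n, N ≤ n → y n = s n) →
      x ≠ y →
      ∃ n0, n0 ∈ I ∧ x n0 ≠ y n0 ∧ (∀ k, n0 < k → x k = y k) ∧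
        D x y = dist (x n0) (y n0) := by
    intro x y hx hy hxy
    obtain ⟨Nx, hNx⟩ := hx.2
    obtain ⟨Ny, hNy⟩ := hy.2
    have hbdd : ∃ b : ℤ, ∀ z, (x z ≠ y z) → z ≤ b := by
      refine ⟨max Nx Ny, fun z hz => ?_⟩
      by_contra h
      push_neg at h
      exact hz ((hNx z (le_of_lt (lt_of_le_of_lt (le_max_left _ _) h))).trans
        (hNy z (le_of_lt (lt_of_le_of_lt (le_max_right _ _) h))).symm)
    have hinh : ∃ z : ℤ, x z ≠ y z := by
      by_contra h; push_neg at h; exact hxy (funext h)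
    obtain ⟨n0, hn0, hmax⟩ := Int.exists_greatest_of_bdd hbdd hinh
    have hn0I : n0 ∈ I := by
      by_contra h
      exact hn0 ((hx.1 n0 h).trans (hy.1 n0 h).symm)
    have hgt : ∀ k, n0 < k → x k = y k := by
      intro k hk
      by_contra h
      exact absurd (hmax k h) (not_le.2 hk)
    exact ⟨n0, hn0I, hn0, hgt, hD_spec x y hxy n0 hn0 hgt⟩
  have hDnn : ∀ p q, 0 ≤ D (u p) (u q) := by
    intro p q
    by_cases h : u p = u q
    · rw [h, hD_self]
    · obtain ⟨n0, _, _, _, hEq⟩ := key _ _ (hu p) (hu q) h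
      rw [hEq]; exact dist_nonneg
  -- coordinatewise bound by `2 * D`
  have hbound : ∀ p q n, dist (u p n) (u q n) ≤ 2 * D (u p) (u q) := by
    intro p q n
    by_cases hpq : u p = u q
    · rw [hpq, dist_self, hD_self]; norm_num
    · obtain ⟨n0, hn0I, hne0, hgt, hEq⟩ := key _ _ (hu p) (hu q) hpq
      by_cases hn : u p n = u q n
      · rw [hn, dist_self]
        linarith [hDnn p q]
      · have hnI : n ∈ I := by
          by_contra h
          exact hn (((hu p).1 n h).trans ((hu q).1 n h).symm)
        rcases lt_trichotomy n n0 with h | h | h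
        · rw [hEq]; exact hdom n hnI n0 hn0I h _ _ hn _ _ hne0
        · subst h
          rw [hEq]
          linarith [dist_nonneg (x := u p n) (y := u q n)]
        · exact absurd (hgt n h) hn
  by_cases hI : I.Nonempty
  · obtain ⟨m, hm⟩ := hI
    obtain ⟨a, b, hab⟩ := hpts m hm
    have hδ : 0 < dist a b := dist_pos.2 hab
    obtain ⟨K0, hK0⟩ := hC (dist a b / 2) (by positivity)
    -- beyond `K0`, all terms of the sequence agree above index `m`
    have hagree : ∀ p q, K0 ≤ p → K0 ≤ q → ∀ k, m < k → u p k = u q k := by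
      intro p q hp hq k hk
      by_cases hpq : u p = u q
      · rw [hpq]
      · obtain ⟨n0, hn0I, hne0, hgt, hEq⟩ := key _ _ (hu p) (hu q) hpq
        by_cases hn0m : m < n0
        · exfalso
          have h1 := hdom m hm n0 hn0I hn0m a b hab _ _ hne0
          have h2 := hK0 p q hp hq
          rw [hEq] at h2
          linarith
        · exact hgt k (lt_of_le_of_lt (not_lt.1 hn0m) hk)
    -- coordinatewise Cauchy, hence coordinatewise limit
    have hcauchy : ∀ n, CauchySeq (fun k => u k n) := by
      intro n
      rw [Metric.cauchySeq_iff]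
      intro ε hε
      obtain ⟨K, hK⟩ := hC (ε / 3) (by linarith)
      refine ⟨K, fun p hp q hq => ?_⟩
      calc dist (u p n) (u q n) ≤ 2 * D (u p) (u q) := hbound p q n
        _ < ε := by have := hK p q hp hq; linarith
    have hlim : ∀ n, ∃ l : S n, Tendsto (fun k => u k n) atTop (𝓝 l) :=
      fun n => cauchySeq_tendsto_of_complete (hcauchy n)
    choose x hx using hlim
    have hxoff : ∀ n ∉ I, x n = s n := by
      intro n hn
      have hc : Tendsto (fun k => u k n) atTop (𝓝 (s n)) := by
        have he : (fun k => u k n) = fun _ => s n := funext fun k => (hu k).1 n hn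
        rw [he]; exact tendsto_const_nhds
      exact tendsto_nhds_unique (hx n) hc
    have hxtop : ∀ k, m < k → x k = u K0 k := by
      intro k hk
      have he : (fun _ : ℕ => u K0 k) =ᶠ[atTop] (fun j => u j k) := by
        filter_upwards [eventually_ge_atTop K0] with j hj
        exact hagree K0 j le_rfl hj k hk
      exact tendsto_nhds_unique (hx k) (tendsto_const_nhds.congr' he)
    obtain ⟨N, hN⟩ := (hu K0).2
    have hxSel : (∀ n ∉ I, x n = s n) ∧ ∃ N' : ℤ, ∀ n, N' ≤ n → x n = s n := by
      refine ⟨hxoff, max N (m + 1), fun n hn => ?_⟩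
      have h1 : m < n := lt_of_lt_of_le (by omega) (le_trans (le_max_right _ _) hn)
      rw [hxtop n h1, hN n (le_trans (le_max_left _ _) hn)]
    refine ⟨x, hxSel, ?_⟩
    intro ε hε
    obtain ⟨K, hK⟩ := hC (ε / 3) (by linarith)
    refine ⟨K, fun p hp => ?_⟩
    by_cases hpx : u p = x
    · rw [hpx, hD_self]; exact hε
    · obtain ⟨n0, hn0I, hne0, hgt, hEq⟩ := key _ _ (hu p) hxSel hpx
      rw [hEq]
      have hle : dist (u p n0) (x n0) ≤ 2 * (ε / 3) := by
        apply le_of_tendsto (tendsto_const_nhds.dist (hx n0))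
        filter_upwards [eventually_ge_atTop K] with q hq
        calc dist (u p n0) (u q n0) ≤ 2 * D (u p) (u q) := hbound p q n0
          _ ≤ 2 * (ε / 3) := by have := hK p q hp hq; linarith
      linarith
  · -- `I` is empty: every element of `Sel` is `s`
    refine ⟨s, ⟨fun n _ => rfl, 0, fun n _ => rfl⟩, fun ε hε => ⟨0, fun p _ => ?_⟩⟩
    have hs : u p = s := funext fun n => (hu p).1 n (fun h => hI ⟨n, h⟩)
    rw [hs, hD_self]; exact hε
end

section
/- In the selection space construction: if each S_n is countable and either inf I > -∞ or sup_{z,w ∈ S_n} d_n(z,w) → 0 as n → -∞, then the selection space (S, d) is separable. -/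
/-- Functions agreeing with `s` outside `[M, N)` form a countable set. -/
lemma selection_aux_countable (S : ℤ → Type*) [∀ n, Countable (S n)]
    (s : ∀ n, S n) (M N : ℤ) :
    {x : ∀ n, S n | ∀ n, (n < M ∨ N ≤ n) → x n = s n}.Countable := by
  rw [Set.countable_coe_iff.symm]
  have hinj : Function.Injective
      (fun (x : {x : ∀ n, S n | ∀ n, (n < M ∨ N ≤ n) → x n = s n})
        (i : Finset.Ico M N) => x.1 i.1) := by
    intro x y h
    ext n
    by_cases hn : M ≤ n ∧ n < N
    · exact congrFun h ⟨n, Finset.mem_Ico.2 hn⟩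
    · rw [x.2 n (by omega), y.2 n (by omega)]
  exact Function.Injective.countable hinj

/-- Separability of the selection space: if each `S n` is countable and either
`inf I > -∞` or `sup_{z,w ∈ S n} d_n(z,w) → 0` as `n → -∞`, then the selection
space is separable: there is a countable subset that is dense for the selection
distance `D`. -/
theorem selection_space_separable
    (I : Set ℤ) (S : ℤ → Type*) [∀ n, MetricSpace (S n)]
    [∀ n, Countable (S n)] (s : ∀ n, S n)
    (hsmall : BddBelow I ∨
      ∀ ε > (0 : ℝ), ∃ N : ℤ, ∀ n ∈ I, n ≤ N → ∀ z w : S n, dist z w < ε)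
    (Sel : Set (∀ n, S n))
    (hSel : Sel = {x | (∀ n ∉ I, x n = s n) ∧ ∃ N : ℤ, ∀ n, N ≤ n → x n = s n})
    (D : (∀ n, S n) → (∀ n, S n) → ℝ)
    (hD_self : ∀ x, D x x = 0)
    (hD_spec : ∀ x y, x ≠ y → ∀ n : ℤ, x n ≠ y n → (∀ m, n < m → x m = y m) →
      D x y = dist (x n) (y n)) :
    ∃ T : Set (∀ n, S n), T.Countable ∧ T ⊆ Sel ∧
      ∀ x ∈ Sel, ∀ ε > (0 : ℝ), ∃ y ∈ T, D x y < ε := by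
  refine ⟨Sel ∩ {x | ∃ M : ℤ, ∀ n < M, x n = s n}, ?_, Set.inter_subset_left, ?_⟩
  · -- countability
    have hsub : Sel ∩ {x | ∃ M : ℤ, ∀ n < M, x n = s n} ⊆
        ⋃ (M : ℤ) (N : ℤ), {x : ∀ n, S n | ∀ n, (n < M ∨ N ≤ n) → x n = s n} := by
      rintro x ⟨hxSel, M, hM⟩
      rw [hSel] at hxSel
      obtain ⟨-, N, hN⟩ := hxSel
      refine Set.mem_iUnion.2 ⟨M, Set.mem_iUnion.2 ⟨N, ?_⟩⟩
      intro n hn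
      rcases hn with hn | hn
      · exact hM n hn
      · exact hN n hn
    refine Set.Countable.mono hsub ?_
    exact Set.countable_iUnion fun M => Set.countable_iUnion fun N =>
      selection_aux_countable S s M N
  · -- density
    intro x hx ε hε
    rw [hSel] at hx
    obtain ⟨hxI, Nx, hNx⟩ := hx
    rcases hsmall with ⟨M, hM⟩ | htail
    · -- I bounded below: x itself is in T
      refine ⟨x, ⟨?_, M, fun n hn => hxI n (fun h => absurd (hM h) (by omega))⟩, ?_⟩
      · rw [hSel]; exact ⟨hxI, Nx, hNx⟩
      · rw [hD_self]; exact hε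
    · obtain ⟨N, hN⟩ := htail ε hε
      set y : ∀ n, S n := fun n => if N < n then x n else s n with hy
      have hySel : y ∈ Sel := by
        rw [hSel]
        refine ⟨fun n hn => ?_, max Nx (N + 1), fun n hn => ?_⟩
        · simp only [hy]; split
          · exact hxI n hn
          · rfl
        · simp only [hy]
          rw [if_pos (by omega)]
          exact hNx n (le_trans (le_max_left _ _) hn)
      refine ⟨y, ⟨hySel, N + 1, fun n hn => by simp only [hy]; rw [if_neg (by omega)]⟩, ?_⟩
      by_cases hxy : x = y
      · rw [hxy, hD_self]; exact hε
      · have hbdd : ∃ b : ℤ, ∀ n, x n ≠ y n → n ≤ b := by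
          refine ⟨N, fun n hn => ?_⟩
          by_contra h
          exact hn (by simp only [hy]; rw [if_pos (by omega)])
        have hinh : ∃ n : ℤ, x n ≠ y n := by
          by_contra h
          push_neg at h
          exact hxy (funext h)
        obtain ⟨n₀, hn₀, hub⟩ := Int.exists_greatest_of_bdd
          (P := fun n => x n ≠ y n) hbdd hinh
        have hle : n₀ ≤ N := by
          by_contra h
          exact hn₀ (by simp only [hy]; rw [if_pos (by omega)])
        have hmax : ∀ m, n₀ < m → x m = y m := by
          intro m hm
          by_contra h
          exact absurd (hub m h) (by omega)
        rw [hD_spec x y hxy n₀ hn₀ hmax]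
        have hn₀I : n₀ ∈ I := by
          by_contra h
          exact hn₀ (by
            rw [hxI n₀ h]
            simp only [hy]
            rw [if_neg (by omega)])
        exact hN n₀ hn₀I hle _ _
end
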